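/- Let (A₁ →d A₀, μ₂, μ₃, α₀, α₁) be a 2-term HA∞-algebra. On C₁ := A₀ ⊕ A₁ define the bilinear map μ((a,m),(b,n)) := (μ₂(a,b), μ₂(a,n) + μ₂(m,b) + μ₂(d(m),n)), the source and target maps s(a,m) := a, t(a,m) := a + d(m), and Φ₁(a,m) := (α₀(a), α₁(m)). Then for all ξ, η ∈ C₁: s(μ(ξ,η)) = μ₂(s(ξ), s(η)), t(μ(ξ,η)) = μ₂(t(ξ), t(η)), and Φ₁(μ(ξ,η)) = μ(Φ₁(ξ), Φ₁(η)). -/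

import Mathlib

/-- A 2-term HA∞-algebra `(A₁ →d A₀, μ₂, μ₃, α₀, α₁)` over a field `k`.
`m00`, `m01`, `m10` are the three components of the bilinear map `μ₂`,
`m3` is the trilinear map `μ₃`, and `a0`, `a1` are the linear maps `α₀`, `α₁`. -/
structure TwoTermHA (k : Type*) [Field k] (A0 A1 : Type*)
    [AddCommGroup A0] [Module k A0] [AddCommGroup A1] [Module k A1] where
  d : A1 →ₗ[k] A0
  m00 : A0 →ₗ[k] A0 →ₗ[k] A0
  m01 : A0 →ₗ[k] A1 →ₗ[k] A1
  m10 : A1 →ₗ[k] A0 →ₗ[k] A1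
  m3 : A0 →ₗ[k] A0 →ₗ[k] A0 →ₗ[k] A1
  a0 : A0 →ₗ[k] A0
  a1 : A1 →ₗ[k] A1
  comm_d : ∀ m, a0 (d m) = d (a1 m)
  comm_m3 : ∀ a b c, a1 (m3 a b c) = m3 (a0 a) (a0 b) (a0 c)
  axb : ∀ a b, a0 (m00 a b) = m00 (a0 a) (a0 b)
  axc : ∀ a m, a1 (m01 a m) = m01 (a0 a) (a1 m)
  axd : ∀ m a, a1 (m10 m a) = m10 (a1 m) (a0 a)
  axe : ∀ a m, d (m01 a m) = m00 a (d m)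
  axf : ∀ m a, d (m10 m a) = m00 (d m) a
  axg : ∀ m n, m01 (d m) n = m10 m (d n)
  axh : ∀ a b c, d (m3 a b c) = m00 (m00 a b) (a0 c) - m00 (a0 a) (m00 b c)
  axi1 : ∀ a b m, m3 a b (d m) = m01 (m00 a b) (a1 m) - m01 (a0 a) (m01 b m)
  axi2 : ∀ a m c, m3 a (d m) c = m10 (m01 a m) (a0 c) - m01 (a0 a) (m10 m c)
  axi3 : ∀ m b c, m3 (d m) b c = m10 (m10 m b) (a0 c) - m10 (a1 m) (m00 b c)
  axj : ∀ a b c e,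
    m3 (m00 a b) (a0 c) (a0 e) - m3 (a0 a) (m00 b c) (a0 e)
        + m3 (a0 a) (a0 b) (m00 c e)
      = m10 (m3 a b c) (a0 (a0 e)) + m01 (a0 (a0 a)) (m3 b c e)

section
variable {k A0 A1 : Type*} [Field k]
  [AddCommGroup A0] [Module k A0] [AddCommGroup A1] [Module k A1]

/-- The multiplication `μ((a,m),(b,n)) := (μ₂(a,b), μ₂(a,n) + μ₂(m,b) + μ₂(d(m),n))`
on `C₁ := A₀ ⊕ A₁`. -/
def muC (T : TwoTermHA k A0 A1) (ξ η : A0 × A1) : A0 × A1 :=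
  (T.m00 ξ.1 η.1, T.m01 ξ.1 η.2 + T.m10 ξ.2 η.1 + T.m01 (T.d ξ.2) η.2)

/-- The source map `s(a,m) := a`. -/
def srcC (ξ : A0 × A1) : A0 := ξ.1

/-- The target map `t(a,m) := a + d(m)`. -/
def tgtC (T : TwoTermHA k A0 A1) (ξ : A0 × A1) : A0 := ξ.1 + T.d ξ.2

/-- The map `Φ₁(a,m) := (α₀(a), α₁(m))` on `C₁ := A₀ ⊕ A₁`. -/
def phiC (T : TwoTermHA k A0 A1) (ξ : A0 × A1) : A0 × A1 := (T.a0 ξ.1, T.a1 ξ.2)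

theorem tgtC_muC (T : TwoTermHA k A0 A1) (ξ η : A0 × A1) :
    tgtC T (muC T ξ η) = T.m00 (tgtC T ξ) (tgtC T η) := by
  simp only [tgtC, muC, map_add, T.axe, T.axf, LinearMap.add_apply]
  abel

theorem phiC_muC (T : TwoTermHA k A0 A1) (ξ η : A0 × A1) :
    phiC T (muC T ξ η) = muC T (phiC T ξ) (phiC T η) := by
  simp only [phiC, muC, map_add, T.axb, T.axc, T.axd, T.comm_d]

theorem muC_functorial (T : TwoTermHA k A0 A1) :
    ∀ ξ η : A0 × A1,
      srcC (muC T ξ η) = T.m00 (srcC ξ) (srcC η)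
        ∧ tgtC T (muC T ξ η) = T.m00 (tgtC T ξ) (tgtC T η)
        ∧ phiC T (muC T ξ η) = muC T (phiC T ξ) (phiC T η) :=
  fun ξ η => ⟨rfl, tgtC_muC T ξ η, phiC_muC T ξ η⟩

end
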